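/- Gallai-Edmonds partition independence: in a bipartite graph G1 with maximum matching M, classify a vertex as even (resp. odd) if some alternating path of even (resp. odd) length from an M-unmatched vertex reaches it, and unreachable otherwise. Then the sets of even, odd, and unreachable vertices are the same for every maximum matching of G1. -/

import Mathlib

universe u v

/-- A matching assigns to each person at most one item, injectively on items. -/
def IsMatching {α β : Type*} (M : α → Option β) : Prop :=
  ∀ a a' b, M a = some b → M a' = some b → a = a'

/-- A matching using only edges of the bipartite graph `E`. -/
def IsMatchingOn {α β : Type*} (E : α → β → Prop) (M : α → Option β) : Prop :=
  (∀ a b, M a = some b → E a b) ∧ IsMatching M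

/-- Number of matched people (= number of edges of the matching). -/
noncomputable def msize {α β : Type*} [Fintype α] (M : α → Option β) : ℕ :=
  Nat.card {a // (M a).isSome}

/-- A maximum cardinality matching of the bipartite graph `E`. -/
def IsMaxMatchingOn {α β : Type*} [Fintype α] (E : α → β → Prop) (M : α → Option β) : Prop :=
  IsMatchingOn E M ∧ ∀ M', IsMatchingOn E M' → msize M' ≤ msize M

mutual
  /-- A person reachable from an `M`-unmatched vertex by an even-length alternating path
  (such paths start at an unmatched person). -/
  inductive EvenA {α : Type u} {β : Type v} (E : α → β → Prop) (M : α → Option β) : α → Prop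
    | base (a : α) : M a = none → EvenA E M a
    | step (a : α) (b : β) : OddB E M b → M a = some b → EvenA E M a
  /-- An item reachable from an `M`-unmatched vertex by an odd-length alternating path. -/
  inductive OddB {α : Type u} {β : Type v} (E : α → β → Prop) (M : α → Option β) : β → Prop
    | step (a : α) (b : β) : EvenA E M a → E a b → M a ≠ some b → OddB E M b
end

mutual
  /-- An item reachable from an `M`-unmatched vertex by an even-length alternating path
  (such paths start at an unmatched item). -/
  inductive EvenB {α : Type u} {β : Type v} (E : α → β → Prop) (M : α → Option β) : β → Prop
    | base (b : β) : (∀ a, M a ≠ some b) → EvenB E M b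
    | step (a : α) (b : β) : OddA E M a → M a = some b → EvenB E M b
  /-- A person reachable from an `M`-unmatched vertex by an odd-length alternating path. -/
  inductive OddA {α : Type u} {β : Type v} (E : α → β → Prop) (M : α → Option β) : α → Prop
    | step (a : α) (b : β) : EvenB E M b → E a b → M a ≠ some b → OddA E M a
end

/-- An unreachable person: no alternating path from an unmatched vertex reaches it. -/
def UnreachA {α β : Type*} (E : α → β → Prop) (M : α → Option β) (a : α) : Prop :=
  ¬ EvenA E M a ∧ ¬ OddA E M a

/-- An unreachable item: no alternating path from an unmatched vertex reaches it. -/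
def UnreachB {α β : Type*} (E : α → β → Prop) (M : α → Option β) (b : β) : Prop :=
  ¬ EvenB E M b ∧ ¬ OddB E M b

/-!
A person is even for a maximum matching `M` iff some maximum matching leaves it unmatched, and this
characterisation does not mention `M`. Flipping an even alternating path ending at `a` gives such a
matching. Conversely, let a maximum matching `N` miss `a` while `M a = some b`. Then `N x = some b`
for some `x` (otherwise `N` could be augmented by the edge `a b`), and moving `b` from `x` to `a`
gives a maximum matching that misses `x` and is closer to `M` in Hamming distance; by induction `x`
is `M`-even, hence so is `a`. Items are handled in the same way, and the odd vertices are exactly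
the neighbours of the even vertices of the other side.
-/

open Function Finset

section

variable {α β : Type*} {E : α → β → Prop} {M N : α → Option β} {a x : α} {b c : β}

theorem hammingDist_lt_of_ne_imp {ι γ : Type*} [Fintype ι] [DecidableEq γ] {f g h : ι → γ}
    (hsub : ∀ i, g i ≠ h i → f i ≠ h i) {i : ι} (hf : f i ≠ h i) (hg : g i = h i) :
    hammingDist g h < hammingDist f h :=
  card_lt_card <| (ssubset_iff_of_subset fun j hj => by simp_all).2 ⟨i, by simp [hf, hg]⟩

section msize

variable [Fintype α] [DecidableEq α]

theorem msize_update_some (N : α → Option β) (a : α) (b : β) :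
    msize (update N a (some b)) = msize (update N a none) + 1 := by
  simp only [msize, Nat.card_eq_fintype_card, Fintype.card_subtype]
  rw [← card_insert_of_notMem (a := a) (by simp)]
  congr 1
  ext x
  by_cases hx : x = a <;> simp [hx]

theorem msize_update_of_eq_none (ha : N a = none) (b : β) :
    msize (update N a (some b)) = msize N + 1 := by
  rw [msize_update_some, ← ha, update_eq_self]

theorem msize_update_of_eq_some (ha : N a = some c) (b : β) :
    msize (update N a (some b)) = msize N := by
  rw [msize_update_some, ← msize_update_some N a c, ← ha, update_eq_self]

end msize

namespace IsMatchingOn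

theorem update_none [DecidableEq α] (hN : IsMatchingOn E N) (x : α) :
    IsMatchingOn E (update N x none) := by
  have h : ∀ y b, update N x none y = some b → N y = some b := fun y b => by
    by_cases hy : y = x <;> simp_all
  exact ⟨fun y b hy => hN.1 y b (h y b hy), fun y z b hy hz => hN.2 y z b (h y b hy) (h z b hz)⟩

theorem update_some [DecidableEq α] (hN : IsMatchingOn E N) (hab : E a b)
    (hb : ∀ x, N x ≠ some b) : IsMatchingOn E (update N a (some b)) := by
  refine ⟨fun y c hy => ?_, fun y z c hy hz => ?_⟩
  · by_cases hya : y = a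
    · subst hya
      simp_all
    · exact hN.1 y c (by simpa [hya] using hy)
  · by_cases hya : y = a <;> by_cases hza : z = a <;> simp_all [hN.2 y z c]

theorem move_item [Fintype α] [DecidableEq α] (hN : IsMatchingOn E N) (hx : N x = some b) (ha : N a = none) (hab : E a b) :
    IsMatchingOn E (update (update N x none) a (some b)) ∧
      msize (update (update N x none) a (some b)) = msize N ∧
      update (update N x none) a (some b) x = none := by
  have hxa : x ≠ a := by rintro rfl; simp_all
  have hb : ∀ y, update N x none y ≠ some b := fun y hy => by
    by_cases hyx : y = x
    · simp_all
    · exact hyx (hN.2 y x b (by simpa [hyx] using hy) hx)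
  refine ⟨(hN.update_none x).update_some hab hb, ?_, by simp [hxa]⟩
  rw [msize_update_of_eq_none (by simp [hxa.symm, ha]), ← msize_update_some, ← hx, update_eq_self]

theorem swap_item [Fintype α] [DecidableEq α] (hN : IsMatchingOn E N) (hx : N x = some c) (hxb : E x b)
    (hb : ∀ y, N y ≠ some b) :
    IsMatchingOn E (update N x (some b)) ∧ msize (update N x (some b)) = msize N ∧
      ∀ y, update N x (some b) y ≠ some c := by
  refine ⟨hN.update_some hxb hb, msize_update_of_eq_some hx b, fun y hy => ?_⟩
  by_cases hyx : y = x
  · subst hyx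
    simp_all
  · exact hyx (hN.2 y x c (by simpa [hyx] using hy) hx)

end IsMatchingOn

namespace IsMaxMatchingOn

variable [Fintype α]

theorem of_msize_eq (hM : IsMaxMatchingOn E M) (hN : IsMatchingOn E N) (h : msize N = msize M) :
    IsMaxMatchingOn E N :=
  ⟨hN, fun K hK => h ▸ hM.2 K hK⟩

theorem exists_eq_some_of_adj (hN : IsMaxMatchingOn E N) (ha : N a = none) (hab : E a b) :
    ∃ x, N x = some b := by
  classical
  by_contra! hb
  have := hN.2 _ (hN.1.update_some hab hb)
  rw [msize_update_of_eq_none ha] at this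
  omega

end IsMaxMatchingOn

theorem evenA_of_isMaxMatchingOn_of_eq_none [Fintype α] (hM : IsMaxMatchingOn E M)
    (hN : IsMaxMatchingOn E N) (ha : N a = none) : EvenA E M a := by
  classical
  induction hd : hammingDist N M using Nat.strong_induction_on generalizing N a with
  | _ d ih =>
  cases hMa : M a with
  | none => exact .base a hMa
  | some b =>
    have hab := hM.1.1 a b hMa
    obtain ⟨x, hx⟩ := hN.exists_eq_some_of_adj ha hab
    have hMx : M x ≠ some b := fun h => by simp_all [hM.1.2 x a b h hMa]
    obtain ⟨hN'm, hN's, hN'x⟩ := hN.1.move_item hx ha hab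
    have hd' : hammingDist (update (update N x none) a (some b)) M < d :=
      hd ▸ hammingDist_lt_of_ne_imp (i := a) (fun y hy => by
        by_cases hya : y = a
        · simp_all
        by_cases hyx : y = x
        · subst hyx; rw [hx]; exact hMx.symm
        · simpa [hya, hyx] using hy) (by simp [ha, hMa]) (by simp [hMa])
    have hxEven : EvenA E M x := ih _ hd' (hN.of_msize_eq hN'm hN's) hN'x rfl
    exact .step a b (.step x b hxEven (hN.1.1 x b hx) hMx) hMa

theorem evenB_of_isMaxMatchingOn_of_forall_ne [Fintype α] (hM : IsMaxMatchingOn E M)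
    (hN : IsMaxMatchingOn E N) (hb : ∀ x, N x ≠ some b) : EvenB E M b := by
  classical
  induction hd : hammingDist N M using Nat.strong_induction_on generalizing N b with
  | _ d ih =>
  by_cases hown : ∃ y, M y = some b
  · obtain ⟨y, hMy⟩ := hown
    have hyb := hM.1.1 y b hMy
    cases hNy : N y with
    | none =>
      obtain ⟨x, hx⟩ := hN.exists_eq_some_of_adj hNy hyb
      exact absurd hx (hb x)
    | some c =>
      have hbc : b ≠ c := by rintro rfl; exact hb y hNy
      obtain ⟨hN'm, hN's, hN'c⟩ := hN.1.swap_item hNy hyb hb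
      have hd' : hammingDist (update N y (some b)) M < d :=
        hd ▸ hammingDist_lt_of_ne_imp (i := y) (fun z hz => by
          by_cases hzy : z = y
          · simp_all
          · simpa [hzy] using hz) (by simp [hNy, hMy, hbc.symm]) (by simp [hMy])
      have hcEven : EvenB E M c := ih _ hd' (hN.of_msize_eq hN'm hN's) hN'c rfl
      exact .step y b (.step y c hcEven (hN.1.1 y c hNy) (by simp [hMy, hbc])) hMy
  · exact .base b fun y hy => hown ⟨y, hy⟩

/- The first `n + 1` breadth-first layers of `EvenA` and `EvenB`. Flipping a path layer by layer
only touches vertices of earlier layers, so no bookkeeping of simple paths is needed. -/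
def EvenAWithin (E : α → β → Prop) (M : α → Option β) : ℕ → α → Prop
  | 0, a => M a = none
  | n + 1, a => EvenAWithin E M n a ∨ ∃ a' b, EvenAWithin E M n a' ∧ E a' b ∧ M a = some b

def EvenBWithin (E : α → β → Prop) (M : α → Option β) : ℕ → β → Prop
  | 0, b => ∀ x, M x ≠ some b
  | n + 1, b => EvenBWithin E M n b ∨ ∃ a c, EvenBWithin E M n c ∧ E a c ∧ M a = some b

theorem EvenA.exists_evenAWithin (h : EvenA E M a) : ∃ n, EvenAWithin E M n a := by
  refine EvenA.rec (motive_1 := fun a _ => ∃ n, EvenAWithin E M n a)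
    (motive_2 := fun b _ => ∃ n a', EvenAWithin E M n a' ∧ E a' b) ?_ ?_ ?_ h
  · exact fun a ha => ⟨0, ha⟩
  · rintro a b - hMa ⟨n, a', ha', hE⟩
    exact ⟨n + 1, .inr ⟨a', b, ha', hE, hMa⟩⟩
  · rintro a b - hE - ⟨n, ha⟩
    exact ⟨n, a, ha, hE⟩

theorem EvenB.exists_evenBWithin (h : EvenB E M b) : ∃ n, EvenBWithin E M n b := by
  refine EvenB.rec (motive_1 := fun b _ => ∃ n, EvenBWithin E M n b)
    (motive_2 := fun a _ => ∃ n c, EvenBWithin E M n c ∧ E a c) ?_ ?_ ?_ h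
  · exact fun b hb => ⟨0, hb⟩
  · rintro a b - hMa ⟨n, c, hc, hE⟩
    exact ⟨n + 1, .inr ⟨a, c, hc, hE, hMa⟩⟩
  · rintro a b - hE - ⟨n, hb⟩
    exact ⟨n, b, hb, hE⟩

section flip

variable [Fintype α] [DecidableEq α]

theorem exists_isMatchingOn_eq_none_of_evenAWithin (hM : IsMatchingOn E M) :
    ∀ n a, EvenAWithin E M n a → ∃ N, IsMatchingOn E N ∧ msize N = msize M ∧ N a = none ∧
      ∀ x, ¬ EvenAWithin E M n x → N x = M x
  | 0, a, ha => ⟨M, hM, rfl, ha, fun _ _ => rfl⟩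
  | n + 1, a, h => by
    by_cases ha : EvenAWithin E M n a
    · obtain ⟨N, hN, hs, hNa, hag⟩ := exists_isMatchingOn_eq_none_of_evenAWithin hM n a ha
      exact ⟨N, hN, hs, hNa, fun x hx => hag x (hx ∘ .inl)⟩
    obtain ⟨a', b, ha', hE, hMa⟩ := h.resolve_left ha
    obtain ⟨N, hN, hs, hNa', hag⟩ := exists_isMatchingOn_eq_none_of_evenAWithin hM n a' ha'
    obtain ⟨hN'm, hN's, hN'a⟩ := hN.move_item ((hag a ha).trans hMa) hNa' hE
    refine ⟨_, hN'm, hN's.trans hs, hN'a, fun x hx => ?_⟩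
    have hxa : x ≠ a := fun h => hx (h ▸ .inr ⟨a', b, ha', hE, hMa⟩)
    have hxa' : x ≠ a' := fun h => hx (h ▸ .inl ha')
    simpa [hxa, hxa'] using hag x (hx ∘ .inl)

theorem exists_isMatchingOn_forall_ne_of_evenBWithin (hM : IsMatchingOn E M) :
    ∀ n b, EvenBWithin E M n b → ∃ N, IsMatchingOn E N ∧ msize N = msize M ∧
      (∀ x, N x ≠ some b) ∧ ∀ x, (∀ c, M x = some c → ¬ EvenBWithin E M n c) → N x = M x
  | 0, b, hb => ⟨M, hM, rfl, hb, fun _ _ => rfl⟩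
  | n + 1, b, h => by
    by_cases hb : EvenBWithin E M n b
    · obtain ⟨N, hN, hs, hNb, hag⟩ := exists_isMatchingOn_forall_ne_of_evenBWithin hM n b hb
      exact ⟨N, hN, hs, hNb, fun x hx => hag x fun c hc => hx c hc ∘ .inl⟩
    obtain ⟨a, c, hc, hE, hMa⟩ := h.resolve_left hb
    obtain ⟨N, hN, hs, hNc, hag⟩ := exists_isMatchingOn_forall_ne_of_evenBWithin hM n c hc
    have hNa : N a = some b := (hag a fun b' hb' => by simp_all).trans hMa
    obtain ⟨hN'm, hN's, hN'b⟩ := hN.swap_item hNa hE hNc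
    refine ⟨_, hN'm, hN's.trans hs, hN'b, fun x hx => ?_⟩
    have hxa : x ≠ a := fun h => hx b (h ▸ hMa) (.inr ⟨a, c, hc, hE, hMa⟩)
    simpa [hxa] using hag x fun c' hc' => hx c' hc' ∘ .inl

end flip

theorem evenA_iff_exists_isMaxMatchingOn_eq_none [Fintype α] (hM : IsMaxMatchingOn E M) :
    EvenA E M a ↔ ∃ N, IsMaxMatchingOn E N ∧ N a = none := by
  classical
  refine ⟨fun h => ?_, fun ⟨N, hN, ha⟩ => evenA_of_isMaxMatchingOn_of_eq_none hM hN ha⟩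
  obtain ⟨n, hn⟩ := h.exists_evenAWithin
  obtain ⟨N, hN, hs, ha, -⟩ := exists_isMatchingOn_eq_none_of_evenAWithin hM.1 n a hn
  exact ⟨N, hM.of_msize_eq hN hs, ha⟩

theorem evenB_iff_exists_isMaxMatchingOn_forall_ne [Fintype α] (hM : IsMaxMatchingOn E M) :
    EvenB E M b ↔ ∃ N, IsMaxMatchingOn E N ∧ ∀ x, N x ≠ some b := by
  classical
  refine ⟨fun h => ?_, fun ⟨N, hN, hb⟩ => evenB_of_isMaxMatchingOn_of_forall_ne hM hN hb⟩
  obtain ⟨n, hn⟩ := h.exists_evenBWithin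
  obtain ⟨N, hN, hs, hb, -⟩ := exists_isMatchingOn_forall_ne_of_evenBWithin hM.1 n b hn
  exact ⟨N, hM.of_msize_eq hN hs, hb⟩

theorem oddB_iff_exists_evenA : OddB E M b ↔ ∃ a, EvenA E M a ∧ E a b := by
  refine ⟨fun ⟨a, _, ha, hab, _⟩ => ⟨a, ha, hab⟩, fun ⟨a, ha, hab⟩ => ?_⟩
  by_cases hMa : M a = some b
  · cases ha with
    | base _ h => simp_all
    | step _ b' hb' h => simp_all
  · exact .step a b ha hab hMa

theorem oddA_iff_exists_evenB (hM : IsMatching M) : OddA E M a ↔ ∃ b, EvenB E M b ∧ E a b := by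
  refine ⟨fun ⟨_, b, hb, hab, _⟩ => ⟨b, hb, hab⟩, fun ⟨b, hb, hab⟩ => ?_⟩
  by_cases hMa : M a = some b
  · cases hb with
    | base _ h => exact absurd hMa (h a)
    | step a' _ ha' h => exact hM a' a b h hMa ▸ ha'
  · exact .step a b hb hab hMa

end

/-- Gallai–Edmonds partition independence: the even, odd (and hence unreachable)
classes are the same for every maximum matching of the bipartite graph `E`. -/
theorem gallai_edmonds_independence {α β : Type*} [Fintype α]
    (E : α → β → Prop) (M M' : α → Option β)
    (hM : IsMaxMatchingOn E M) (hM' : IsMaxMatchingOn E M') :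
    (∀ a, EvenA E M a ↔ EvenA E M' a) ∧ (∀ a, OddA E M a ↔ OddA E M' a) ∧
    (∀ a, UnreachA E M a ↔ UnreachA E M' a) ∧
    (∀ b, EvenB E M b ↔ EvenB E M' b) ∧ (∀ b, OddB E M b ↔ OddB E M' b) ∧
    (∀ b, UnreachB E M b ↔ UnreachB E M' b) := by
  have hEvenA : ∀ a, EvenA E M a ↔ EvenA E M' a := fun a => by
    rw [evenA_iff_exists_isMaxMatchingOn_eq_none hM, evenA_iff_exists_isMaxMatchingOn_eq_none hM']
  have hEvenB : ∀ b, EvenB E M b ↔ EvenB E M' b := fun b => by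
    rw [evenB_iff_exists_isMaxMatchingOn_forall_ne hM,
      evenB_iff_exists_isMaxMatchingOn_forall_ne hM']
  have hOddA : ∀ a, OddA E M a ↔ OddA E M' a := fun a => by
    simp only [oddA_iff_exists_evenB hM.1.2, oddA_iff_exists_evenB hM'.1.2, hEvenB]
  have hOddB : ∀ b, OddB E M b ↔ OddB E M' b := fun b => by
    simp only [oddB_iff_exists_evenA, hEvenA]
  refine ⟨hEvenA, hOddA, fun a => ?_, hEvenB, hOddB, fun b => ?_⟩
  · simp only [UnreachA, hEvenA, hOddA]
  · simp only [UnreachB, hEvenB, hOddB]
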